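/- Define M : ℤ × ℤ → ℤ/36ℤ to be 4-periodic in both indices with fundamental 4×4 block (rows listed top to bottom): (3, 2, 33, 34), (4, 3, 32, 33), (9, 16, 3, 2), (14, 9, 4, 3); that is, M(i,j) is the block entry in row i mod 4 and column j mod 4. Then M is an SL2-tiling over ℤ/36ℤ (for all i, j ∈ ℤ, M(i,j)·M(i+1,j+1) − M(i,j+1)·M(i+1,j) = 1 in ℤ/36ℤ), and every entry of M is wild: for all i, j ∈ ℤ, the determinant of the 3×3 matrix (M(i+u, j+v))_{u,v ∈ {−1,0,1}} is nonzero in ℤ/36ℤ. -/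

import Mathlib

/-- An SL2-tiling over a commutative ring `R`. -/
def IsSL2Tiling {R : Type*} [CommRing R] (m : ℤ × ℤ → R) : Prop :=
  ∀ i j : ℤ, m (i, j) * m (i + 1, j + 1) - m (i, j + 1) * m (i + 1, j) = 1

/-- The determinant of the 3×3 block of `m` centred at `(i, j)`. -/
def nbhdDet {R : Type*} [CommRing R] (m : ℤ × ℤ → R) (i j : ℤ) : R :=
  (Matrix.of fun u v : Fin 3 => m (i + ((u : ℕ) : ℤ) - 1, j + ((v : ℕ) : ℤ) - 1)).det

/-- The entry `m (i, j)` is wild if the surrounding 3×3 determinant is nonzero. -/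
def IsWild {R : Type*} [CommRing R] (m : ℤ × ℤ → R) (i j : ℤ) : Prop :=
  nbhdDet m i j ≠ 0

/-- The doubly 4-periodic tiling over `ℤ/36ℤ` with fundamental 4×4 block rows
`(3, 2, 33, 34)`, `(4, 3, 32, 33)`, `(9, 16, 3, 2)`, `(14, 9, 4, 3)`. -/
def M36 : ℤ × ℤ → ZMod 36 := fun ij =>
  ![![3, 2, 33, 34],
    ![4, 3, 32, 33],
    ![9, 16, 3, 2],
    ![14, 9, 4, 3]] (Fin.ofNat 4 (ij.1 % 4).toNat) (Fin.ofNat 4 (ij.2 % 4).toNat)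

lemma M36_mod (i j : ℤ) : M36 (i, j) = M36 (i % 4, j % 4) := by
  simp [M36, Int.emod_emod_of_dvd _ (dvd_refl 4)]

theorem M36_isSL2Tiling_and_every_entry_wild :
    IsSL2Tiling M36 ∧ ∀ i j : ℤ, IsWild M36 i j := by
  constructor
  · intro i j
    have hi : i % 4 = 0 ∨ i % 4 = 1 ∨ i % 4 = 2 ∨ i % 4 = 3 := by omega
    have hj : j % 4 = 0 ∨ j % 4 = 1 ∨ j % 4 = 2 ∨ j % 4 = 3 := by omega
    rw [M36_mod i j, M36_mod (i+1) (j+1), M36_mod i (j+1), M36_mod (i+1) j,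
        Int.add_emod i 1, Int.add_emod j 1]
    rcases hi with h|h|h|h <;> rcases hj with h'|h'|h'|h' <;> rw [h, h'] <;> decide
  · intro i j
    have hi : i % 4 = 0 ∨ i % 4 = 1 ∨ i % 4 = 2 ∨ i % 4 = 3 := by omega
    have hj : j % 4 = 0 ∨ j % 4 = 1 ∨ j % 4 = 2 ∨ j % 4 = 3 := by omega
    rw [IsWild, nbhdDet, Matrix.det_fin_three]
    simp only [Matrix.of_apply, Fin.isValue, Fin.val_zero, Fin.val_one, Fin.val_two,
      Nat.cast_ofNat, Nat.cast_one, Nat.cast_zero]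
    rw [show i + 0 - 1 = i - 1 by ring, show j + 0 - 1 = j - 1 by ring,
        show i + 1 - 1 = i by ring, show j + 1 - 1 = j by ring,
        show i + 2 - 1 = i + 1 by ring, show j + 2 - 1 = j + 1 by ring]
    rw [M36_mod (i-1) (j-1), M36_mod (i-1) j, M36_mod (i-1) (j+1),
        M36_mod i (j-1), M36_mod i j, M36_mod i (j+1),
        M36_mod (i+1) (j-1), M36_mod (i+1) j, M36_mod (i+1) (j+1),
        Int.add_emod i 1, Int.add_emod j 1, Int.sub_emod i 1, Int.sub_emod j 1]
    rcases hi with h|h|h|h <;> rcases hj with h'|h'|h'|h' <;> rw [h, h'] <;> decide
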